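/- arXiv:2509.26426 — 5 statements merged into one kernel-verified Lean document; each statement's English description precedes it below -/
import Mathlib

section
/- Let G be a k-cycle graph with central vertex u, cycles indexed so that l_1 ≥ l_2 ≥ ... ≥ l_k ≥ 2 where l_i is the number of non-central vertices of cycle C_i. Then for every j with 1 ≤ j ≤ k, b(u,G) ≥ ⌈(l_j + 2j - 1)/2⌉. -/
/-- A telephone broadcast scheme from originator `v` completing within `t` time units:
a nondecreasing sequence of sets of informed vertices, starting from `{v}`, such that
each newly informed vertex is called by a distinct already-informed neighbor, and all
vertices are informed by time `t`. -/
def IsBroadcastIn {V : Type*} (G : SimpleGraph V) (v : V) (t : ℕ) : Prop :=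
  ∃ f : ℕ → Set V, f 0 = {v} ∧
    (∀ n, f n ⊆ f (n + 1)) ∧
    (∀ n, ∃ g : V → V, Set.InjOn g (f (n + 1) \ f n) ∧
      ∀ u ∈ f (n + 1) \ f n, g u ∈ f n ∧ G.Adj (g u) u) ∧
    f t = Set.univ

/-- The broadcast time of the vertex `v` in the graph `G`. -/
noncomputable def broadcastTime {V : Type*} (G : SimpleGraph V) (v : V) : ℕ :=
  sInf {t | IsBroadcastIn G v t}


/-- The `k`-cycle (flower) graph: `k` cycles sharing exactly one central vertex
(represented by `none`); cycle `i` has `l i` non-central vertices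
`some ⟨i, 0⟩, …, some ⟨i, l i - 1⟩`, consecutive ones adjacent, and the central
vertex adjacent to the first and last of them. -/
def kCycleGraph (k : ℕ) (l : Fin k → ℕ) :
    SimpleGraph (Option (Σ i : Fin k, Fin (l i))) :=
  SimpleGraph.fromRel (fun x y =>
    match x, y with
    | none, some ⟨i, j⟩ => (j : ℕ) = 0 ∨ (j : ℕ) + 1 = l i
    | some ⟨i, j⟩, some ⟨i', j'⟩ => (i : ℕ) = i' ∧ (j : ℕ) + 1 = j'
    | _, _ => False)

open Classical in
noncomputable def growSeq {V : Type*} (G : SimpleGraph V) (v : V) : ℕ → Set V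
  | 0 => {v}
  | n + 1 =>
    if h : ∃ w, w ∉ growSeq G v n ∧ ∃ x ∈ growSeq G v n, G.Adj x w then
      insert h.choose (growSeq G v n) else growSeq G v n

lemma growSeq_mono {V : Type*} (G : SimpleGraph V) (v : V) (n : ℕ) :
    growSeq G v n ⊆ growSeq G v (n + 1) := by
  rw [growSeq]
  split
  · exact Set.subset_insert _ _
  · exact subset_rfl

lemma growSeq_mem_v {V : Type*} (G : SimpleGraph V) (v : V) (n : ℕ) : v ∈ growSeq G v n := by
  induction n with
  | zero => simp [growSeq]
  | succ n ih => exact growSeq_mono G v n ih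

lemma exists_broadcast {V : Type*} [Fintype V] (G : SimpleGraph V) (hc : G.Preconnected)
    (v : V) : IsBroadcastIn G v (Fintype.card V) := by
  classical
  refine ⟨growSeq G v, rfl, growSeq_mono G v, ?_, ?_⟩
  · intro n
    refine ⟨fun u => if h : ∃ x ∈ growSeq G v n, G.Adj x u then h.choose else v, ?_, ?_⟩
    · apply Set.Subsingleton.injOn
      intro a ha b hb
      rw [growSeq] at ha hb
      by_cases h : ∃ w ∉ growSeq G v n, ∃ x ∈ growSeq G v n, G.Adj x w
      · rw [dif_pos h] at ha hb
        rcases ha with ⟨ha1, ha2⟩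
        rcases hb with ⟨hb1, hb2⟩
        rcases Set.mem_insert_iff.1 ha1 with h1 | h1
        · rcases Set.mem_insert_iff.1 hb1 with h2 | h2
          · rw [h1, h2]
          · exact absurd h2 hb2
        · exact absurd h1 ha2
      · rw [dif_neg h] at ha
        exact absurd ha.1 ha.2
    · intro u hu
      have hadj : ∃ x ∈ growSeq G v n, G.Adj x u := by
        rcases hu with ⟨hu1, hu2⟩
        rw [growSeq] at hu1
        by_cases h : ∃ w ∉ growSeq G v n, ∃ x ∈ growSeq G v n, G.Adj x w
        · rw [dif_pos h] at hu1
          rcases Set.mem_insert_iff.1 hu1 with h1 | h1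
          · subst h1; exact h.choose_spec.2
          · exact absurd h1 hu2
        · rw [dif_neg h] at hu1
          exact absurd hu1 hu2
      simp only [dif_pos hadj]
      exact ⟨hadj.choose_spec.1, hadj.choose_spec.2⟩
  · -- termination
    have key : ∀ n : ℕ, growSeq G v n = Set.univ ∨ n + 1 ≤ (growSeq G v n).ncard := by
      intro n
      induction n with
      | zero => right; simp [growSeq]
      | succ n ih =>
        rcases ih with h | h
        · left
          exact Set.eq_univ_of_univ_subset (h ▸ growSeq_mono G v n)
        · by_cases hu : growSeq G v n = Set.univ
          · left; exact Set.eq_univ_of_univ_subset (hu ▸ growSeq_mono G v n)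
          · right
            have hex : ∃ w, w ∉ growSeq G v n ∧ ∃ x ∈ growSeq G v n, G.Adj x w := by
              have : ∃ w, w ∉ growSeq G v n := by
                by_contra hcon
                push_neg at hcon
                exact hu (Set.eq_univ_of_forall hcon)
              obtain ⟨w, hw⟩ := this
              obtain ⟨p⟩ := hc v w
              obtain ⟨d, _, hd1, hd2⟩ :=
                p.exists_boundary_dart (growSeq G v n) (growSeq_mem_v G v n) hw
              exact ⟨d.toProd.2, hd2, d.toProd.1, hd1, d.adj⟩
            rw [growSeq, dif_pos hex,
              Set.ncard_insert_of_notMem hex.choose_spec.1 (Set.toFinite _)]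
            omega
    rcases key (Fintype.card V) with h | h
    · exact h
    · exfalso
      have := Set.ncard_le_ncard (Set.subset_univ (growSeq G v (Fintype.card V)))
        (Set.toFinite _)
      rw [Set.ncard_univ, Nat.card_eq_fintype_card] at this
      omega

lemma kCG_adj_char {k : ℕ} {l : Fin k → ℕ} {x : Option (Σ i : Fin k, Fin (l i))}
    {i : Fin k} {m : Fin (l i)} (h : (kCycleGraph k l).Adj x (some ⟨i, m⟩)) :
    (x = none ∧ ((m : ℕ) = 0 ∨ (m : ℕ) + 1 = l i)) ∨
    ∃ m' : Fin (l i), x = some ⟨i, m'⟩ ∧ ((m' : ℕ) + 1 = m ∨ (m : ℕ) + 1 = m') := by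
  rw [kCycleGraph, SimpleGraph.fromRel_adj] at h
  obtain ⟨hne, h | h⟩ := h
  · cases x with
    | none => exact Or.inl ⟨rfl, h⟩
    | some s =>
      obtain ⟨i', m'⟩ := s
      obtain ⟨hi, hm⟩ := h
      have hii : i' = i := Fin.ext hi
      subst hii
      exact Or.inr ⟨m', rfl, Or.inl hm⟩
  · cases x with
    | none => exact h.elim
    | some s =>
      obtain ⟨i', m'⟩ := s
      obtain ⟨hi, hm⟩ := h
      have hii : i' = i := Fin.ext hi.symm
      subst hii
      exact Or.inr ⟨m', rfl, Or.inr hm⟩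

lemma kCG_adj_none {k : ℕ} {l : Fin k → ℕ} {i : Fin k} {m : Fin (l i)}
    (h : (m : ℕ) = 0 ∨ (m : ℕ) + 1 = l i) :
    (kCycleGraph k l).Adj none (some ⟨i, m⟩) := by
  rw [kCycleGraph, SimpleGraph.fromRel_adj]
  exact ⟨by simp, Or.inl h⟩

lemma kCG_adj_succ {k : ℕ} {l : Fin k → ℕ} {i : Fin k} {m m' : Fin (l i)}
    (h : (m : ℕ) + 1 = m') :
    (kCycleGraph k l).Adj (some ⟨i, m⟩) (some ⟨i, m'⟩) := by
  rw [kCycleGraph, SimpleGraph.fromRel_adj]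
  refine ⟨?_, Or.inl ⟨rfl, h⟩⟩
  intro hcon
  simp only [Option.some.injEq, Sigma.mk.inj_iff, heq_eq_eq, true_and] at hcon
  omega

lemma kCG_preconnected (k : ℕ) (l : Fin k → ℕ) : (kCycleGraph k l).Preconnected := by
  have key : ∀ x, (kCycleGraph k l).Reachable none x := by
    intro x
    cases x with
    | none => exact SimpleGraph.Reachable.refl _
    | some s =>
      obtain ⟨i, m⟩ := s
      have : ∀ m : ℕ, (hm : m < l i) →
          (kCycleGraph k l).Reachable none (some ⟨i, ⟨m, hm⟩⟩) := by
        intro m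
        induction m with
        | zero => exact fun hm => (kCG_adj_none (Or.inl rfl)).reachable
        | succ m ih =>
          intro hm
          exact (ih (by omega)).trans (kCG_adj_succ (m' := ⟨m + 1, hm⟩) rfl).reachable
      have := this m.val m.isLt
      simpa using this
  intro x y
  exact (key x).symm.trans (key y)

abbrev Spos {k : ℕ} (l : Fin k → ℕ) (f : ℕ → Set (Option (Σ i : Fin k, Fin (l i))))
    (i : Fin k) (n : ℕ) : Set ℕ :=
  {m : ℕ | ∃ hm : m < l i, some ⟨i, ⟨m, hm⟩⟩ ∈ f n}

lemma mem_Spos {k : ℕ} {l : Fin k → ℕ} {f : ℕ → Set (Option (Σ i : Fin k, Fin (l i)))}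
    {i : Fin k} {n : ℕ} {m : ℕ} :
    m ∈ Spos l f i n ↔ ∃ hm : m < l i, some ⟨i, ⟨m, hm⟩⟩ ∈ f n := Iff.rfl

noncomputable abbrev Etime {k : ℕ} (l : Fin k → ℕ)
    (f : ℕ → Set (Option (Σ i : Fin k, Fin (l i)))) (i : Fin k) : ℕ :=
  sInf {n | (Spos l f i n).Nonempty}

lemma kCG_lower (k : ℕ) (l : Fin k → ℕ) (hl : ∀ i, 2 ≤ l i)
    (hmono : ∀ i j : Fin k, i ≤ j → l j ≤ l i) (j : Fin k) (t : ℕ)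
    (h : IsBroadcastIn (kCycleGraph k l) none t) :
    l j + 2 * ((j : ℕ) + 1) ≤ 1 + 2 * t := by
  classical
  obtain ⟨f, h0, hsub, hstep, ht⟩ := h
  have hSt : ∀ i : Fin k, ∀ m (hm : m < l i), m ∈ Spos l f i t := by
    intro i m hm
    rw [mem_Spos]
    exact ⟨hm, by rw [ht]; trivial⟩
  have hEt : ∀ i, Etime l f i ≤ t := fun i => Nat.sInf_le (s := {n | (Spos l f i n).Nonempty}) ⟨0, hSt i 0 (by have := hl i; omega)⟩
  have hEmem : ∀ i, (Spos l f i (Etime l f i)).Nonempty :=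
    fun i => Nat.sInf_mem (s := {n | (Spos l f i n).Nonempty}) ⟨t, ⟨0, hSt i 0 (by have := hl i; omega)⟩⟩
  have hEpos : ∀ i, 1 ≤ Etime l f i := by
    intro i
    by_contra hcon
    obtain ⟨m, hm, hmem⟩ := hEmem i
    have : Etime l f i = 0 := by omega
    rw [this, h0] at hmem
    simp at hmem
  have hEprev : ∀ i, Spos l f i (Etime l f i - 1) = ∅ := by
    intro i
    have : Etime l f i - 1 < Etime l f i := by have := hEpos i; omega
    have h2 := Nat.notMem_of_lt_sInf (s := {n | (Spos l f i n).Nonempty}) this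
    rw [Set.not_nonempty_iff_eq_empty.symm] at *
    simpa using h2
  -- the step function into time n, for n ≥ 1
  have step' : ∀ n : ℕ, 1 ≤ n → ∃ g : Option (Σ i : Fin k, Fin (l i)) → Option (Σ i : Fin k, Fin (l i)), Set.InjOn g (f n \ f (n - 1)) ∧
      ∀ u ∈ f n \ f (n - 1), g u ∈ f (n - 1) ∧ (kCycleGraph k l).Adj (g u) u := by
    intro n hn
    have := hstep (n - 1)
    rwa [Nat.sub_add_cancel hn] at this
  -- entry analysis: at entry time, every newly informed cycle-i vertex was called by `none`
  have entry_none : ∀ (i : Fin k) (g : Option (Σ i : Fin k, Fin (l i)) → Option (Σ i : Fin k, Fin (l i))),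
      (∀ u ∈ f (Etime l f i) \ f (Etime l f i - 1), g u ∈ f (Etime l f i - 1) ∧ (kCycleGraph k l).Adj (g u) u) →
      ∀ m (hm : m < l i), m ∈ Spos l f i (Etime l f i) →
        some ⟨i, ⟨m, hm⟩⟩ ∈ f (Etime l f i) \ f (Etime l f i - 1) ∧ g (some ⟨i, ⟨m, hm⟩⟩) = none ∧
          (m = 0 ∨ m + 1 = l i) := by
    intro i g hg m hm hmem
    obtain ⟨hm', hmem'⟩ := hmem
    have hmem'' : some ⟨i, ⟨m, hm⟩⟩ ∈ f (Etime l f i) := hmem'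
    have hnot : some ⟨i, ⟨m, hm⟩⟩ ∉ f (Etime l f i - 1) := by
      intro hcon
      have : m ∈ Spos l f i (Etime l f i - 1) := ⟨hm, hcon⟩
      rw [hEprev i] at this
      exact this
    have hdiff : some ⟨i, ⟨m, hm⟩⟩ ∈ f (Etime l f i) \ f (Etime l f i - 1) := ⟨hmem'', hnot⟩
    obtain ⟨hgmem, hgadj⟩ := hg _ hdiff
    rcases kCG_adj_char hgadj with ⟨hgn, hpos⟩ | ⟨m', hgm, _⟩
    · exact ⟨hdiff, hgn, by simpa using hpos⟩
    · exfalso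
      rw [hgm] at hgmem
      have : (m' : ℕ) ∈ Spos l f i (Etime l f i - 1) := ⟨m'.isLt, by simpa using hgmem⟩
      rw [hEprev i] at this
      exact this
  -- entry times are distinct
  have hEinj : ∀ i i' : Fin k, i ≠ i' → Etime l f i ≠ Etime l f i' := by
    intro i i' hne hEq
    obtain ⟨g, hginj, hg⟩ := step' (Etime l f i) (hEpos i)
    obtain ⟨m, hm, hmem⟩ := hEmem i
    obtain ⟨m2, hm2, hmem2⟩ := hEmem i'
    have e1 := entry_none i g hg m hm ⟨hm, hmem⟩
    have hg' : ∀ u ∈ f (Etime l f i') \ f (Etime l f i' - 1), g u ∈ f (Etime l f i' - 1) ∧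
        (kCycleGraph k l).Adj (g u) u := by rw [← hEq]; exact hg
    have e2 := entry_none i' g hg' m2 hm2 ⟨hm2, hmem2⟩
    have hd2 : some ⟨i', ⟨m2, hm2⟩⟩ ∈ f (Etime l f i) \ f (Etime l f i - 1) := by rw [hEq]; exact e2.1
    have := hginj e1.1 hd2 (by rw [e1.2.1, e2.2.1])
    simp only [Option.some.injEq, Sigma.mk.inj_iff] at this
    exact hne (this.1)
  -- entry: Spos l f i (Etime l f i) is a subsingleton located at an endpoint
  have hentry : ∀ i : Fin k, ∃ m₀ : ℕ, (m₀ = 0 ∨ m₀ + 1 = l i) ∧ Spos l f i (Etime l f i) ⊆ {m₀} := by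
    intro i
    obtain ⟨g, hginj, hg⟩ := step' (Etime l f i) (hEpos i)
    obtain ⟨m₀, hmem₀⟩ := hEmem i
    obtain ⟨hm₀, -⟩ := id hmem₀
    have e0 := entry_none i g hg m₀ hm₀ hmem₀
    refine ⟨m₀, e0.2.2, ?_⟩
    intro m hmem
    obtain ⟨hm, -⟩ := id hmem
    have e1 := entry_none i g hg m hm hmem
    have := hginj e1.1 e0.1 (by rw [e1.2.1, e0.2.1])
    simp only [Option.some.injEq, Sigma.mk.inj_iff, heq_eq_eq, Fin.mk.injEq] at this
    simpa using this.2
  -- the prefix/suffix invariant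
  have inv : ∀ (i : Fin k) (n : ℕ), Etime l f i ≤ n → ∃ a b : ℕ,
      a + b ≤ 1 + 2 * (n - Etime l f i) ∧ ∀ m ∈ Spos l f i n, m < a ∨ l i ≤ m + b := by
    intro i n hn
    induction n, hn using Nat.le_induction with
    | base =>
      obtain ⟨m₀, hpos, hsub⟩ := hentry i
      rcases hpos with h0' | h1'
      · exact ⟨1, 0, by omega, fun m hm => Or.inl (by have := hsub hm; simp at this; omega)⟩
      · refine ⟨0, 1, by omega, fun m hm => Or.inr ?_⟩
        have := hsub hm; simp at this; omega
    | succ n hn ih =>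
      obtain ⟨a, b, hab, hS⟩ := ih
      refine ⟨a + 1, b + 1, by omega, ?_⟩
      intro m hmem
      obtain ⟨hm, hmemf⟩ := hmem
      by_cases hold : m ∈ Spos l f i n
      · rcases hS m hold with h' | h' <;> omega
      · have hnotf : some ⟨i, ⟨m, hm⟩⟩ ∉ f n := fun hcon => hold ⟨hm, hcon⟩
        obtain ⟨g, hginj, hg⟩ := hstep n
        obtain ⟨hgmem, hgadj⟩ := hg _ ⟨hmemf, hnotf⟩
        rcases kCG_adj_char hgadj with ⟨_, hpos⟩ | ⟨m', hgm, hrel⟩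
        · simp only at hpos; omega
        · rw [hgm] at hgmem
          have hm'S : (m' : ℕ) ∈ Spos l f i n := ⟨m'.isLt, by simpa using hgmem⟩
          rcases hS _ hm'S with h' | h' <;> rcases hrel with h'' | h'' <;>
            simp only at h'' <;> omega
  -- cycle fully informed at time t forces l i ≤ a + b
  have final : ∀ i : Fin k, l i + 2 * Etime l f i ≤ 1 + 2 * t := by
    intro i
    obtain ⟨a, b, hab, hS⟩ := inv i t (hEt i)
    have hliab : l i ≤ a + b := by
      by_contra hcon
      push_neg at hcon
      have ha : a < l i := by omega
      rcases hS a (hSt i a ha) with h' | h' <;> omega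
    have := hEt i
    omega
  -- pigeonhole: some cycle c ≤ j has entry time ≥ j + 1
  have pigeon : ∃ c : Fin k, c ≤ j ∧ (j : ℕ) + 1 ≤ Etime l f c := by
    by_contra hcon
    push_neg at hcon
    have hcard := Finset.card_le_card_of_injOn (Etime l f)
      (s := Finset.Iic j) (t := Finset.Icc 1 (j : ℕ))
      (fun c hc => Finset.mem_Icc.2 ⟨hEpos c, by
        have := hcon c (Finset.mem_Iic.1 hc); omega⟩)
      (fun a ha b hb hab => by
        by_contra hne
        exact hEinj a b hne hab)
    rw [Fin.card_Iic, Nat.card_Icc] at hcard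
    omega
  obtain ⟨c, hcj, hEc⟩ := pigeon
  have h1 := final c
  have h2 := hmono c j hcj
  omega

/-- In a `k`-cycle graph with central vertex `u` and cycle sizes
`l 0 ≥ l 1 ≥ … ≥ l (k-1) ≥ 2` (so cycle `j` is the `(j+1)`-st largest),
for every `j`, `b(u,G) ≥ ⌈(l_j + 2(j+1) - 1)/2⌉`. -/
theorem stmt8 (k : ℕ) (hk : 0 < k) (l : Fin k → ℕ)
    (hmono : ∀ i j : Fin k, i ≤ j → l j ≤ l i) (hl : ∀ i, 2 ≤ l i) (j : Fin k) :
    ⌈(((l j : ℚ)) + 2 * ((j : ℕ) + 1) - 1) / 2⌉ ≤ (broadcastTime (kCycleGraph k l) none : ℤ) := by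
  classical
  have hne : {t | IsBroadcastIn (kCycleGraph k l) none t}.Nonempty :=
    ⟨_, exists_broadcast (kCycleGraph k l) (kCG_preconnected k l) none⟩
  have hmem := Nat.sInf_mem hne
  have hbound := kCG_lower k l hl hmono j _ hmem
  rw [broadcastTime]
  rw [Int.ceil_le]
  rw [div_le_iff₀ (by norm_num)]
  have hb := (Nat.cast_le (α := ℚ)).2 hbound
  push_cast at hb ⊢
  linarith
end

section
/- Let G be a k-cycle graph whose cycles all have equal length l = l_1 = ... = l_k (non-central vertices per cycle), and let v_c be the central vertex. The broadcast scheme in which v_c informs cycle C_i at time units i and 2k+1-i completes in exactly k + ⌈(l-1)/2⌉ time units, and this equals b(v_c,G). -/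
/-!
A broadcast scheme amounts to a call schedule: an informing time `τ` and a caller `c` for every
vertex other than the originator, with `τ (c u) < τ u`, `c u` adjacent to `u`, and no vertex
making two calls at the same time.

Upper bound: cycle `i` (counted from `0`) is entered from the centre through its first vertex at
time `i + 1` and through its last vertex at time `2k - i`, and every vertex is informed from the
nearer entry, hence by time `min (i + 1 + j) (2k - i + (l - 1 - j)) ≤ k + ⌊l / 2⌋`, as the two
arguments sum to `2k + l`.

Lower bound: the centre makes at most one call per time unit, so the first entries into the `k`
cycles happen at distinct positive times and some cycle is first entered at a time `m ≥ k`.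
Information moves along a cycle by one vertex per time unit and the other entry into that cycle
happens at time `≥ m + 1`, so the vertex at distance `⌊l / 2⌋` from the first entry is informed
no earlier than `m + ⌊l / 2⌋`. Finally `⌈(l - 1) / 2⌉ = ⌊l / 2⌋`.
-/

open Function

section CallSchedule

variable {V : Type*}

structure IsCallSchedule (G : SimpleGraph V) (v : V) (t : ℕ) (τ : V → ℕ) (c : V → V) : Prop where
  time_eq_zero_iff : ∀ u, τ u = 0 ↔ u = v
  time_le : ∀ u, τ u ≤ t
  time_caller_lt : ∀ u, u ≠ v → τ (c u) < τ u
  adj_caller : ∀ u, u ≠ v → G.Adj (c u) u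
  caller_injOn : ∀ u w, u ≠ v → w ≠ v → τ u = τ w → c u = c w → u = w

theorem isBroadcastIn_iff_exists_isCallSchedule {G : SimpleGraph V} {v : V} {t : ℕ} :
    IsBroadcastIn G v t ↔ ∃ τ c, IsCallSchedule G v t τ c := by
  classical
  constructor
  · rintro ⟨f, h0, -, hstep, ht⟩
    have hreached : ∀ u, ∃ n, u ∈ f n := fun u => ⟨t, ht ▸ Set.mem_univ u⟩
    choose g hg hcall using hstep
    let τ u := Nat.find (hreached u)
    have hτ_zero : ∀ u, τ u = 0 ↔ u = v := fun u => by
      simp [τ, Nat.find_eq_zero, h0]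
    have hnew : ∀ u, u ≠ v → u ∈ f (τ u - 1 + 1) \ f (τ u - 1) := fun u hu => by
      have hpos : τ u ≠ 0 := (hτ_zero u).not.mpr hu
      rw [Nat.sub_add_cancel (Nat.one_le_iff_ne_zero.mpr hpos)]
      exact ⟨Nat.find_spec (hreached u), Nat.find_min (hreached u) (show τ u - 1 < τ u by omega)⟩
    refine ⟨τ, fun u => g (τ u - 1) u, hτ_zero, fun u => Nat.find_le (ht ▸ Set.mem_univ u),
      fun u hu => ?_, fun u hu => (hcall _ u (hnew u hu)).2, fun u w hu hw huw hc => ?_⟩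
    · have hpos : τ u ≠ 0 := (hτ_zero u).not.mpr hu
      have : τ (g (τ u - 1) u) ≤ τ u - 1 := Nat.find_le (hcall _ u (hnew u hu)).1
      omega
    · exact hg _ (hnew u hu) (huw ▸ hnew w hw) (by simpa only [huw] using hc)
  · rintro ⟨τ, c, hs⟩
    refine ⟨fun n => {u | τ u ≤ n}, ?_, fun n u hu => Nat.le_succ_of_le hu, fun n => ⟨c, ?_, ?_⟩,
      Set.eq_univ_of_forall hs.time_le⟩
    · ext u
      simp [← hs.time_eq_zero_iff]
    · rintro u ⟨hu, hu'⟩ w ⟨hw, hw'⟩ hc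
      simp only [Set.mem_ofPred_eq, not_le] at hu hu' hw hw'
      exact hs.caller_injOn u w (by simp [← hs.time_eq_zero_iff]; omega)
        (by simp [← hs.time_eq_zero_iff]; omega) (by omega) hc
    · rintro u ⟨hu, hu'⟩
      simp only [Set.mem_ofPred_eq, not_le] at hu hu' ⊢
      have huv : u ≠ v := by simp [← hs.time_eq_zero_iff]; omega
      exact ⟨by have := hs.time_caller_lt u huv; omega, hs.adj_caller u huv⟩

end CallSchedule

theorem sigma_fin_mk_eq_iff {ι : Type*} {n : ι → ℕ} {i i' : ι} {j : Fin (n i)} {j' : Fin (n i')} :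
    (⟨i, j⟩ : Σ i, Fin (n i)) = ⟨i', j'⟩ ↔ i = i' ∧ (j : ℕ) = j' := by
  constructor
  · intro h
    obtain ⟨rfl, h⟩ := Sigma.mk.inj_iff.mp h
    exact ⟨rfl, congrArg Fin.val (eq_of_heq h)⟩
  · rintro ⟨rfl, h⟩
    rw [Fin.ext h]

theorem Fin.exists_le_apply_of_injective {k : ℕ} {f : Fin k → ℕ} (hf : Injective f)
    (hpos : ∀ i, 0 < f i) (hk : 0 < k) : ∃ i, k ≤ f i := by
  by_contra! h
  have := Finset.card_le_card_of_injOn f (s := Finset.univ) (t := Finset.Ioo 0 k)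
    (fun i _ => by simp [hpos i, h i]) hf.injOn
  simp only [Finset.card_univ, Fintype.card_fin, Nat.card_Ioo] at this
  omega

theorem ceil_natCast_sub_one_div_two {K : Type*} [Field K] [LinearOrder K] [IsStrictOrderedRing K]
    [FloorRing K] (n : ℕ) : ⌈((n : K) - 1) / 2⌉ = (n / 2 : ℕ) := by
  rw [Int.ceil_eq_iff]
  obtain ⟨m, rfl | rfl⟩ := Nat.even_or_odd' n
  · rw [Nat.mul_div_cancel_left m two_pos]
    push_cast
    constructor <;> linarith
  · rw [Nat.mul_add_div two_pos]
    push_cast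
    norm_num

section KCycleGraph

variable {k : ℕ} {l : Fin k → ℕ}

theorem kCycleGraph_adj_none_some (i : Fin k) (j : Fin (l i)) :
    (kCycleGraph k l).Adj none (some ⟨i, j⟩) ↔ (j : ℕ) = 0 ∨ (j : ℕ) + 1 = l i := by
  simp [kCycleGraph]

theorem kCycleGraph_adj_some_some (i : Fin k) (j j' : Fin (l i)) :
    (kCycleGraph k l).Adj (some ⟨i, j⟩) (some ⟨i, j'⟩) ↔ (j : ℕ) + 1 = j' ∨ (j' : ℕ) + 1 = j := by
  simp only [kCycleGraph, SimpleGraph.fromRel_adj, ne_eq, Option.some.injEq, Sigma.mk.injEq,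
    heq_eq_eq, true_and, and_iff_right_iff_imp]
  rintro h rfl
  omega

theorem kCycleGraph_adj_some {y : Option (Σ i : Fin k, Fin (l i))} {i : Fin k} {j : Fin (l i)}
    (h : (kCycleGraph k l).Adj y (some ⟨i, j⟩)) :
    (y = none ∧ ((j : ℕ) = 0 ∨ (j : ℕ) + 1 = l i)) ∨
      ∃ j' : Fin (l i), y = some ⟨i, j'⟩ ∧ ((j' : ℕ) + 1 = j ∨ (j : ℕ) + 1 = j') := by
  rcases y with _ | ⟨i', j'⟩
  · exact .inl ⟨rfl, (kCycleGraph_adj_none_some i j).mp h⟩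
  · have hi : i' = i := by
      simp only [kCycleGraph, SimpleGraph.fromRel_adj] at h
      omega
    subst hi
    exact .inr ⟨j', rfl, (kCycleGraph_adj_some_some i' j' j).mp h⟩

def cycleSchemeTime (k : ℕ) (l : Fin k → ℕ) : Option (Σ i : Fin k, Fin (l i)) → ℕ
  | none => 0
  | some ⟨i, j⟩ => min ((i : ℕ) + 1 + j) (2 * k - i + (l i - 1 - j))

def cycleSchemeCaller (k : ℕ) (l : Fin k → ℕ) :
    Option (Σ i : Fin k, Fin (l i)) → Option (Σ i : Fin k, Fin (l i))
  | none => none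
  | some ⟨i, j⟩ =>
    if (i : ℕ) + 1 + j ≤ 2 * k - i + (l i - 1 - j) then
      if (j : ℕ) = 0 then none else some ⟨i, ⟨j - 1, by omega⟩⟩
    else
      if h : (j : ℕ) + 1 = l i then none else some ⟨i, ⟨j + 1, by omega⟩⟩

theorem isCallSchedule_cycleScheme {L : ℕ} (hL : ∀ i, l i ≤ L) :
    IsCallSchedule (kCycleGraph k l) none (k + L / 2) (cycleSchemeTime k l)
      (cycleSchemeCaller k l) where
  time_eq_zero_iff := by
    rintro (_ | ⟨i, j⟩)
    · simp [cycleSchemeTime]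
    · simp only [cycleSchemeTime, reduceCtorEq, iff_false]
      omega
  time_le := by
    rintro (_ | ⟨i, j⟩)
    · simp [cycleSchemeTime]
    · have := hL i
      simp only [cycleSchemeTime]
      omega
  time_caller_lt := by
    rintro (_ | ⟨i, j⟩) hu
    · exact absurd rfl hu
    · simp only [cycleSchemeCaller]
      split_ifs <;> simp only [cycleSchemeTime] <;> omega
  adj_caller := by
    rintro (_ | ⟨i, j⟩) hu
    · exact absurd rfl hu
    · simp only [cycleSchemeCaller]
      split_ifs <;> simp only [kCycleGraph_adj_none_some, kCycleGraph_adj_some_some, or_true] <;>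
        omega
  caller_injOn := by
    rintro (_ | ⟨i, j⟩) (_ | ⟨i', j'⟩) hu hw hτ hc
    any_goals exact absurd rfl ‹_›
    simp only [cycleSchemeTime] at hτ
    simp only [cycleSchemeCaller] at hc
    simp only [Option.some.injEq, sigma_fin_mk_eq_iff]
    split_ifs at hc <;> simp only [Option.some.injEq, sigma_fin_mk_eq_iff] at hc <;>
      obtain rfl : i = i' := by omega
    all_goals omega

end KCycleGraph

namespace IsCallSchedule

variable {k : ℕ} {l : Fin k → ℕ} {t : ℕ} {τ : Option (Σ i : Fin k, Fin (l i)) → ℕ}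
  {c : Option (Σ i : Fin k, Fin (l i)) → Option (Σ i : Fin k, Fin (l i))}

theorem exists_entry_add_dist_le (hs : IsCallSchedule (kCycleGraph k l) none t τ c) (i : Fin k)
    (j : Fin (l i)) :
    ∃ p : Fin (l i), c (some ⟨i, p⟩) = none ∧
      τ (some ⟨i, p⟩) + ((j : ℤ) - p).natAbs ≤ τ (some ⟨i, j⟩) := by
  induction h : τ (some ⟨i, j⟩) using Nat.strong_induction_on generalizing j with
  | _ n ih =>
    rcases kCycleGraph_adj_some (hs.adj_caller _ (Option.some_ne_none _)) with
      ⟨hc, -⟩ | ⟨j', hc, hj'⟩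
    · exact ⟨j, hc, by simp [h]⟩
    · have hlt := hs.time_caller_lt (some ⟨i, j⟩) (Option.some_ne_none _)
      rw [hc, h] at hlt
      obtain ⟨p, hp, hle⟩ := ih _ hlt j' rfl
      exact ⟨p, hp, by omega⟩

theorem exists_entry_add_half_le (hs : IsCallSchedule (kCycleGraph k l) none t τ c)
    (i : Fin k) (hi : 0 < l i) :
    ∃ p : Fin (l i), c (some ⟨i, p⟩) = none ∧ τ (some ⟨i, p⟩) + l i / 2 ≤ t := by
  let entries := Finset.univ.filter fun p : Fin (l i) => c (some ⟨i, p⟩) = none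
  obtain ⟨p₀, hp₀, -⟩ := hs.exists_entry_add_dist_le i ⟨0, hi⟩
  obtain ⟨p, hp, hmin⟩ := entries.exists_min_image (fun p => τ (some ⟨i, p⟩))
    ⟨p₀, by simp [entries, hp₀]⟩
  simp only [Finset.mem_filter, Finset.mem_univ, true_and, entries] at hp hmin
  have hport := (kCycleGraph_adj_none_some i p).mp (hp ▸ hs.adj_caller _ (Option.some_ne_none _))
  -- the vertex at distance `l i / 2` from the entry `p`, on the side of the other entry point
  obtain ⟨j, hjv⟩ : ∃ j : Fin (l i), (j : ℕ) = if (p : ℕ) = 0 then l i / 2 else l i - 1 - l i / 2 :=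
    by split_ifs <;> exact ⟨⟨_, by omega⟩, rfl⟩
  obtain ⟨q, hq, hle⟩ := hs.exists_entry_add_dist_le i j
  have hqport := (kCycleGraph_adj_none_some i q).mp (hq ▸ hs.adj_caller _ (Option.some_ne_none _))
  have hj := hs.time_le (some ⟨i, j⟩)
  refine ⟨p, hp, ?_⟩
  rcases eq_or_ne q p with rfl | hqp
  · split_ifs at hjv <;> omega
  · have hne : τ (some ⟨i, p⟩) ≠ τ (some ⟨i, q⟩) := by
      intro h
      have := hs.caller_injOn _ _ (Option.some_ne_none _) (Option.some_ne_none _) h (hp.trans hq.symm)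
      simp only [Option.some.injEq, sigma_fin_mk_eq_iff] at this
      exact hqp (Fin.ext this.2.symm)
    have := hmin q hq
    split_ifs at hjv <;> omega

theorem add_half_le (hs : IsCallSchedule (kCycleGraph k l) none t τ c) (hk : 0 < k) {L : ℕ}
    (hL : 0 < L) (hl : ∀ i, L ≤ l i) : k + L / 2 ≤ t := by
  choose p hp hle using fun i => hs.exists_entry_add_half_le i (hL.trans_le (hl i))
  have hinj : Injective fun i => τ (some ⟨i, p i⟩) := fun i i' h => by
    have := hs.caller_injOn _ _ (Option.some_ne_none _) (Option.some_ne_none _) h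
      ((hp i).trans (hp i').symm)
    simp only [Option.some.injEq, sigma_fin_mk_eq_iff] at this
    exact this.1
  have hpos i : 0 < τ (some ⟨i, p i⟩) :=
    Nat.pos_of_ne_zero ((hs.time_eq_zero_iff _).not.mpr (Option.some_ne_none _))
  obtain ⟨i, hi⟩ := Fin.exists_le_apply_of_injective hinj hpos hk
  have := hle i
  have := hl i
  omega

end IsCallSchedule

/-- In a `k`-cycle graph all of whose cycles have the same length
`l` (non-central vertices per cycle), the scheme where the central vertex informs
cycle `C_i` at times `i` and `2k+1-i` completes in exactly `k + ⌈(l-1)/2⌉` time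
units, and this equals the broadcast time of the central vertex. -/
theorem stmt10 (k : ℕ) (hk : 0 < k) (lc : ℕ) (hlc : 2 ≤ lc)
    (l : Fin k → ℕ) (hl : ∀ i, l i = lc) :
    ∃ T : ℕ, (T : ℤ) = k + ⌈((lc : ℚ) - 1) / 2⌉ ∧
      IsBroadcastIn (kCycleGraph k l) none T ∧
      broadcastTime (kCycleGraph k l) none = T := by
  have hupper : IsBroadcastIn (kCycleGraph k l) none (k + lc / 2) :=
    isBroadcastIn_iff_exists_isCallSchedule.mpr
      ⟨_, _, isCallSchedule_cycleScheme fun i => (hl i).le⟩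
  have hlower (t : ℕ) (ht : IsBroadcastIn (kCycleGraph k l) none t) : k + lc / 2 ≤ t := by
    obtain ⟨τ, c, hs⟩ := isBroadcastIn_iff_exists_isCallSchedule.mp ht
    exact hs.add_half_le hk (by omega) fun i => (hl i).ge
  refine ⟨k + lc / 2, ?_, hupper, IsLeast.csInf_eq ⟨hupper, hlower⟩⟩
  rw [ceil_natCast_sub_one_div_two]
  push_cast
  rfl
end

section
/- For positive integers l and k with l ≥ 2, define t_A = ⌈(l + 3k - 2)/2⌉ and t_opt = ⌈(2k + l - 1)/2⌉. Then t_A/t_opt < 3/2, and for every ε > 0 there exist l ≥ 2 and k with t_A/t_opt > 3/2 - ε. -/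
/-- For positive integers `l` and `k` with `l ≥ 2`, define
`t_A = ⌈(l + 3k - 2)/2⌉` and `t_opt = ⌈(2k + l - 1)/2⌉`. Then `t_A/t_opt < 3/2`,
and for every `ε > 0` there exist `l ≥ 2` and `k` with `t_A/t_opt > 3/2 - ε`. -/
theorem stmt11 :
    (∀ l k : ℕ, 2 ≤ l → 0 < k →
      ((⌈((l : ℚ) + 3 * k - 2) / 2⌉ : ℚ) / (⌈(2 * (k : ℚ) + l - 1) / 2⌉ : ℚ) < 3 / 2)) ∧
    (∀ ε : ℚ, 0 < ε → ∃ l k : ℕ, 2 ≤ l ∧ 0 < k ∧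
      (3 / 2 - ε <
        (⌈((l : ℚ) + 3 * k - 2) / 2⌉ : ℚ) / (⌈(2 * (k : ℚ) + l - 1) / 2⌉ : ℚ))) := by
  constructor
  · intro l k hl hk
    set A : ℤ := ⌈((l : ℚ) + 3 * k - 2) / 2⌉ with hA
    set B : ℤ := ⌈(2 * (k : ℚ) + l - 1) / 2⌉ with hB
    have hl' : (2 : ℚ) ≤ l := by exact_mod_cast hl
    have hk' : (1 : ℚ) ≤ k := by exact_mod_cast hk
    have hAlt : (A : ℚ) < ((l : ℚ) + 3 * k - 2) / 2 + 1 := Int.ceil_lt_add_one _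
    have hBge : (2 * (k : ℚ) + l - 1) / 2 ≤ (B : ℚ) := Int.le_ceil _
    have hB0 : (0 : ℚ) < B := by nlinarith
    -- integrality: 2A < l + 3k hence 2A ≤ l + 3k - 1
    have h1 : 2 * (A : ℚ) < (l : ℚ) + 3 * k := by nlinarith
    have h1' : 2 * A < (l : ℤ) + 3 * k := by exact_mod_cast h1
    have h2 : 2 * A ≤ (l : ℤ) + 3 * k - 1 := by omega
    have h2' : 2 * (A : ℚ) ≤ (l : ℚ) + 3 * k - 1 := by exact_mod_cast h2
    rw [div_lt_div_iff₀ hB0 (by norm_num : (0:ℚ) < 2)]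
    nlinarith
  · intro ε hε
    refine ⟨2, ⌈3 / (2 * ε)⌉₊ + 1, le_refl 2, Nat.succ_pos _, ?_⟩
    set k : ℕ := ⌈3 / (2 * ε)⌉₊ + 1 with hkdef
    have hkge : 3 / (2 * ε) < (k : ℚ) := by
      calc 3 / (2 * ε) ≤ (⌈3 / (2 * ε)⌉₊ : ℚ) := Nat.le_ceil _
        _ < (k : ℚ) := by rw [hkdef]; push_cast; linarith
    set A : ℤ := ⌈((2 : ℚ) + 3 * k - 2) / 2⌉ with hA
    set B : ℤ := ⌈(2 * (k : ℚ) + 2 - 1) / 2⌉ with hB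
    have hk' : (1 : ℚ) ≤ k := by exact_mod_cast Nat.succ_le_succ (Nat.zero_le _)
    have hAge : ((2 : ℚ) + 3 * k - 2) / 2 ≤ (A : ℚ) := Int.le_ceil _
    have hA1 : 3 * (k : ℚ) / 2 ≤ (A : ℚ) := by linarith [hAge]
    have hBge : (2 * (k : ℚ) + 2 - 1) / 2 ≤ (B : ℚ) := Int.le_ceil _
    have hB0 : (0 : ℚ) < B := by nlinarith
    have hBle : (B : ℚ) ≤ (k : ℚ) + 1 := by
      have hint : B ≤ (k : ℤ) + 1 := by
        apply Int.ceil_le.mpr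
        push_cast
        linarith
      exact_mod_cast hint
    have hA0 : (0 : ℚ) ≤ A := by linarith
    have key : (3 * (k : ℚ) / 2) / ((k : ℚ) + 1) ≤ (A : ℚ) / (B : ℚ) :=
      div_le_div₀ hA0 hA1 hB0 hBle
    have hk0 : (0 : ℚ) < (k : ℚ) + 1 := by linarith
    have step : 3 / 2 - ε < (3 * (k : ℚ) / 2) / ((k : ℚ) + 1) := by
      have h3 : 3 < (k : ℚ) * (2 * ε) := (div_lt_iff₀ (by positivity)).mp hkge
      rw [lt_div_iff₀ hk0]
      nlinarith
    have hcast : ((2 : ℕ) : ℚ) = 2 := by norm_cast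
    rw [hcast]
    exact lt_of_lt_of_le step key
end

section
/- Let k ≥ 3 and suppose a k-cycle graph has cycle lengths l_i (non-central vertices) with l_1 ≥ ... ≥ l_k ≥ 2, and there exists p with 1 ≤ p < k such that l_i = k + 2p - 2i + 2 for 1 ≤ i ≤ p and l_j = p + k - j + 1 for p < j ≤ k. Then the schedule in which the central vertex informs C_i at times i and k+i for i ≤ p, and informs C_j only at time j for j > p, completes broadcasting in exactly p+k time units, and p+k equals the optimal broadcast time from the central vertex. -/
namespace S15
variable {k p : ℕ} {l : Fin k → ℕ}

lemma sigma_mk_eq_iff {i i' : Fin k} {j : Fin (l i)} {j' : Fin (l i')} :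
    (⟨i, j⟩ : Σ i, Fin (l i)) = ⟨i', j'⟩ ↔ (i : ℕ) = i' ∧ (j : ℕ) = j' := by
  constructor
  · intro h
    obtain ⟨h1, h2⟩ := Sigma.mk.inj_iff.mp h
    subst h1
    exact ⟨rfl, congrArg Fin.val (eq_of_heq h2)⟩
  · rintro ⟨h1, h2⟩
    have hi : i = i' := Fin.ext h1
    subst hi
    have : j = j' := Fin.ext h2
    rw [this]

lemma adj_iff (x : Option (Σ i : Fin k, Fin (l i))) (i : Fin k) (j : Fin (l i)) :
    (kCycleGraph k l).Adj x (some ⟨i, j⟩) ↔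
      (x = none ∧ ((j : ℕ) = 0 ∨ (j : ℕ) + 1 = l i)) ∨
      (∃ j' : Fin (l i), x = some ⟨i, j'⟩ ∧ (((j' : ℕ) + 1 = j) ∨ ((j : ℕ) + 1 = j'))) := by
  match x with
  | none =>
    rw [kCycleGraph, SimpleGraph.fromRel_adj]
    simp
  | some ⟨i', j'⟩ =>
    rw [kCycleGraph, SimpleGraph.fromRel_adj]
    constructor
    · rintro ⟨hne, h | h⟩
      · obtain ⟨hi, hj⟩ := h
        have : i' = i := Fin.ext hi
        subst this
        exact Or.inr ⟨j', rfl, Or.inl hj⟩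
      · obtain ⟨hi, hj⟩ := h
        have : i = i' := Fin.ext hi
        subst this
        exact Or.inr ⟨j', rfl, Or.inr hj⟩
    · rintro (⟨h, -⟩ | ⟨j'', hx, hj⟩)
      · exact absurd h (by simp)
      · rw [Option.some.injEq] at hx
        obtain ⟨hi, hjv⟩ := sigma_mk_eq_iff.mp hx
        refine ⟨?_, ?_⟩
        · intro hcon
          rw [Option.some.injEq] at hcon
          obtain ⟨-, h2⟩ := sigma_mk_eq_iff.mp hcon
          omega
        · rcases hj with h | h
          · exact Or.inl ⟨hi, by omega⟩
          · exact Or.inr ⟨hi.symm, by omega⟩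

def sched (k p : ℕ) (l : Fin k → ℕ) (n : ℕ) : Set (Option (Σ i : Fin k, Fin (l i))) :=
  {x | ∀ i : Fin k, ∀ j : Fin (l i), x = some ⟨i, j⟩ →
    ((i : ℕ) + 1 + (j : ℕ) ≤ n ∨
      ((i : ℕ) < p ∧ k + (i : ℕ) + 1 + (l i - 1 - (j : ℕ)) ≤ n))}

lemma none_mem_sched (n : ℕ) : (none : Option (Σ i : Fin k, Fin (l i))) ∈ sched k p l n := by
  intro i j h; exact absurd h (by simp)

lemma some_mem_sched {n : ℕ} {i : Fin k} {j : Fin (l i)} :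
    some ⟨i, j⟩ ∈ sched k p l n ↔
      ((i : ℕ) + 1 + (j : ℕ) ≤ n ∨
        ((i : ℕ) < p ∧ k + (i : ℕ) + 1 + (l i - 1 - (j : ℕ)) ≤ n)) := by
  constructor
  · intro h; exact h i j rfl
  · intro h i' j' he
    rw [Option.some.injEq] at he
    obtain ⟨h1, h2⟩ := sigma_mk_eq_iff.mp he.symm
    have : i' = i := Fin.ext h1
    subst this
    have : j' = j := Fin.ext h2
    subst this
    exact h


/-- the caller function at step `n → n+1` -/
noncomputable def caller (k p : ℕ) (l : Fin k → ℕ) (n : ℕ) :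
    Option (Σ i : Fin k, Fin (l i)) → Option (Σ i : Fin k, Fin (l i)) := fun x =>
  match x with
  | none => none
  | some ⟨i, j⟩ =>
    if (i : ℕ) + 1 + (j : ℕ) = n + 1 then
      if (j : ℕ) = 0 then none
      else some ⟨i, ⟨(j : ℕ) - 1, by omega⟩⟩
    else
      if (j : ℕ) + 1 = l i then none
      else some ⟨i, ⟨min ((j : ℕ) + 1) (l i - 1), by have := j.isLt; omega⟩⟩

lemma caller_some (n : ℕ) (i : Fin k) (j : Fin (l i)) :
    caller k p l n (some ⟨i, j⟩) =
      if (i : ℕ) + 1 + (j : ℕ) = n + 1 then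
        if (j : ℕ) = 0 then none
        else some ⟨i, ⟨(j : ℕ) - 1, by omega⟩⟩
      else
        if (j : ℕ) + 1 = l i then none
        else some ⟨i, ⟨min ((j : ℕ) + 1) (l i - 1), by have := j.isLt; omega⟩⟩ := rfl

lemma some_eq_of {i1 i2 : Fin k} {j1 : Fin (l i1)} {j2 : Fin (l i2)}
    (h1 : (i1 : ℕ) = i2) (h2 : (j1 : ℕ) = j2) :
    (some ⟨i1, j1⟩ : Option (Σ i : Fin k, Fin (l i))) = some ⟨i2, j2⟩ := by
  rw [Option.some.injEq, sigma_mk_eq_iff]; exact ⟨h1, h2⟩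

lemma upper (hl : ∀ i, 2 ≤ l i) (hpk : p < k)
    (hsmall : ∀ i : Fin k, (i : ℕ) + 1 ≤ p →
      (l i : ℤ) = (k : ℤ) + 2 * p - 2 * ((i : ℕ) + 1) + 2)
    (hbig : ∀ j : Fin k, p < (j : ℕ) + 1 →
      (l j : ℤ) = (p : ℤ) + k - ((j : ℕ) + 1) + 1) :
    IsBroadcastIn (kCycleGraph k l) none (p + k) := by
  classical
  have hli : ∀ i : Fin k, (i : ℕ) < p → (l i : ℤ) = k + 2 * p - 2 * (i : ℕ) := by
    intro i hi
    have := hsmall i (by omega)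
    push_cast at this ⊢
    omega
  have hli' : ∀ i : Fin k, p ≤ (i : ℕ) → (l i : ℤ) = p + k - (i : ℕ) := by
    intro i hi
    have := hbig i (by omega)
    push_cast at this ⊢
    omega
  refine ⟨sched k p l, ?_, ?_, ?_, ?_⟩
  · -- f 0 = {none}
    ext x
    match x with
    | none => simp [none_mem_sched]
    | some ⟨i, j⟩ =>
      simp only [some_mem_sched, Set.mem_singleton_iff]
      constructor
      · intro h; exfalso; omega
      · intro h; exact absurd h (by simp)
  · -- monotone
    intro n x hx i j he
    rcases hx i j he with h | h
    · exact Or.inl (by omega)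
    · exact Or.inr ⟨h.1, by omega⟩
  · -- caller condition
    intro n
    refine ⟨caller k p l n, ?_, ?_⟩
    · -- injectivity
      rintro u1 ⟨h1m, h1n⟩ u2 ⟨h2m, h2n⟩ heq
      match u1, u2 with
      | none, _ => exact absurd (none_mem_sched n) h1n
      | some _, none => exact absurd (none_mem_sched n) h2n
      | some ⟨i1, j1⟩, some ⟨i2, j2⟩ =>
        rw [some_mem_sched] at h1m h2m
        rw [some_mem_sched] at h1n h2n
        push_neg at h1n h2n
        have hfin1 := j1.isLt
        have hfin2 := j2.isLt
        have hik1 := i1.isLt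
        have hik2 := i2.isLt
        rw [caller_some, caller_some] at heq
        by_cases hA1 : (i1 : ℕ) + 1 + (j1 : ℕ) = n + 1 <;>
          by_cases hA2 : (i2 : ℕ) + 1 + (j2 : ℕ) = n + 1
        · rw [if_pos hA1, if_pos hA2] at heq
          by_cases hz1 : (j1 : ℕ) = 0 <;> by_cases hz2 : (j2 : ℕ) = 0
          · exact some_eq_of (by omega) (by omega)
          · rw [if_pos hz1, if_neg hz2] at heq
            exact absurd heq.symm (by simp)
          · rw [if_neg hz1, if_pos hz2] at heq
            exact absurd heq (by simp)
          · rw [if_neg hz1, if_neg hz2, Option.some.injEq, sigma_mk_eq_iff] at heq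
            simp only at heq
            exact some_eq_of (by omega) (by omega)
        · -- u1 side A, u2 side B
          have hB2 : (i2 : ℕ) < p ∧ k + (i2 : ℕ) + 1 + (l i2 - 1 - (j2 : ℕ)) = n + 1 := by
            rcases h2m with h | h
            · omega
            · exact ⟨h.1, by omega⟩
          have hl2 := hli i2 hB2.1
          rw [if_pos hA1, if_neg hA2] at heq
          by_cases hz1 : (j1 : ℕ) = 0 <;> by_cases hz2 : (j2 : ℕ) + 1 = l i2
          · rw [if_pos hz1, if_pos hz2] at heq
            exfalso; omega
          · rw [if_pos hz1, if_neg hz2] at heq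
            exact absurd heq (by simp)
          · rw [if_neg hz1, if_pos hz2] at heq
            exact absurd heq (by simp)
          · rw [if_neg hz1, if_neg hz2, Option.some.injEq, sigma_mk_eq_iff] at heq
            simp only at heq
            exfalso
            have hieq : (i1 : ℕ) = i2 := heq.1
            have hlv : l i1 = l i2 := by congr 1; exact Fin.ext hieq
            omega
        · -- u1 side B, u2 side A
          have hB1 : (i1 : ℕ) < p ∧ k + (i1 : ℕ) + 1 + (l i1 - 1 - (j1 : ℕ)) = n + 1 := by
            rcases h1m with h | h
            · omega
            · exact ⟨h.1, by omega⟩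
          have hl1 := hli i1 hB1.1
          rw [if_neg hA1, if_pos hA2] at heq
          by_cases hz1 : (j1 : ℕ) + 1 = l i1 <;> by_cases hz2 : (j2 : ℕ) = 0
          · rw [if_pos hz1, if_pos hz2] at heq
            exfalso; omega
          · rw [if_pos hz1, if_neg hz2] at heq
            exact absurd heq (by simp)
          · rw [if_neg hz1, if_pos hz2] at heq
            exact absurd heq (by simp)
          · rw [if_neg hz1, if_neg hz2, Option.some.injEq, sigma_mk_eq_iff] at heq
            simp only at heq
            exfalso
            have hieq : (i1 : ℕ) = i2 := heq.1
            have hlv : l i1 = l i2 := by congr 1; exact Fin.ext hieq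
            omega
        · -- both side B
          have hB1 : (i1 : ℕ) < p ∧ k + (i1 : ℕ) + 1 + (l i1 - 1 - (j1 : ℕ)) = n + 1 := by
            rcases h1m with h | h
            · omega
            · exact ⟨h.1, by omega⟩
          have hB2 : (i2 : ℕ) < p ∧ k + (i2 : ℕ) + 1 + (l i2 - 1 - (j2 : ℕ)) = n + 1 := by
            rcases h2m with h | h
            · omega
            · exact ⟨h.1, by omega⟩
          have hl1 := hli i1 hB1.1
          have hl2 := hli i2 hB2.1
          rw [if_neg hA1, if_neg hA2] at heq
          by_cases hz1 : (j1 : ℕ) + 1 = l i1 <;> by_cases hz2 : (j2 : ℕ) + 1 = l i2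
          · exact some_eq_of (by omega) (by omega)
          · rw [if_pos hz1, if_neg hz2] at heq
            exact absurd heq (by simp)
          · rw [if_neg hz1, if_pos hz2] at heq
            exact absurd heq (by simp)
          · rw [if_neg hz1, if_neg hz2, Option.some.injEq, sigma_mk_eq_iff] at heq
            simp only at heq
            have hieq : (i1 : ℕ) = i2 := heq.1
            have hlv : l i1 = l i2 := by congr 1; exact Fin.ext hieq
            exact some_eq_of (by omega) (by omega)
    · -- caller property
      rintro u ⟨hm, hn⟩
      match u with
      | none => exact absurd (none_mem_sched n) hn
      | some ⟨i, j⟩ =>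
        rw [some_mem_sched] at hm
        rw [some_mem_sched] at hn
        push_neg at hn
        have hfin := j.isLt
        rw [caller_some]
        by_cases hA : (i : ℕ) + 1 + (j : ℕ) = n + 1
        · rw [if_pos hA]
          by_cases hz : (j : ℕ) = 0
          · rw [if_pos hz]
            exact ⟨none_mem_sched n, (adj_iff _ _ _).mpr (Or.inl ⟨rfl, Or.inl hz⟩)⟩
          · rw [if_neg hz]
            constructor
            · rw [some_mem_sched]; left; simp only; omega
            · exact (adj_iff _ _ _).mpr (Or.inr ⟨_, rfl, Or.inl (by simp only; omega)⟩)
        · rw [if_neg hA]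
          have hB : (i : ℕ) < p ∧ k + (i : ℕ) + 1 + (l i - 1 - (j : ℕ)) = n + 1 := by
            rcases hm with h | h
            · omega
            · exact ⟨h.1, by omega⟩
          by_cases hz : (j : ℕ) + 1 = l i
          · rw [if_pos hz]
            exact ⟨none_mem_sched n, (adj_iff _ _ _).mpr (Or.inl ⟨rfl, Or.inr hz⟩)⟩
          · rw [if_neg hz]
            have hmin : min ((j : ℕ) + 1) (l i - 1) = (j : ℕ) + 1 := by omega
            constructor
            · rw [some_mem_sched]; right
              refine ⟨hB.1, ?_⟩
              simp only [hmin]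
              omega
            · exact (adj_iff _ _ _).mpr (Or.inr ⟨_, rfl, Or.inr (by simp only [hmin])⟩)
  · -- completion at time p + k
    ext x
    simp only [Set.mem_univ, iff_true]
    match x with
    | none => exact none_mem_sched _
    | some ⟨i, j⟩ =>
      rw [some_mem_sched]
      have hfin := j.isLt
      have hik := i.isLt
      by_cases hi : (i : ℕ) < p
      · have := hli i hi
        by_cases h1 : (i : ℕ) + 1 + (j : ℕ) ≤ p + k
        · exact Or.inl h1
        · exact Or.inr ⟨hi, by omega⟩
      · have := hli' i (by omega)
        exact Or.inl (by omega)

/-- The key invariant for the lower bound: the informed set within each cycle is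
contained in a prefix arc of length `a i` and a suffix arc of length `b i`, the
number of nonempty arcs is at most `n`, and twice the total arc length is at most
`n * (n+1)`. -/
lemma invariant (hl : ∀ i, 2 ≤ l i)
    {f : ℕ → Set (Option (Σ i : Fin k, Fin (l i)))}
    (hf0 : f 0 = {(none : Option (Σ i : Fin k, Fin (l i)))})
    (hcall : ∀ n, ∃ g, Set.InjOn g (f (n + 1) \ f n) ∧
      ∀ u ∈ f (n + 1) \ f n, g u ∈ f n ∧ (kCycleGraph k l).Adj (g u) u) :
    ∀ n, ∃ a b : Fin k → ℕ,
      (∀ i : Fin k, ∀ j : Fin (l i), some ⟨i, j⟩ ∈ f n →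
        ((j : ℕ) < a i ∨ l i ≤ (j : ℕ) + b i)) ∧
      ((Finset.univ.filter fun i => a i ≠ 0).card +
        (Finset.univ.filter fun i => b i ≠ 0).card ≤ n) ∧
      2 * (∑ i : Fin k, (a i + b i)) ≤ n * (n + 1) := by
  classical
  intro n
  induction n with
  | zero =>
    refine ⟨fun _ => 0, fun _ => 0, ?_, ?_, ?_⟩
    · intro i j hj
      rw [hf0] at hj
      exact absurd hj (by simp)
    · simp
    · simp
  | succ n ih =>
    obtain ⟨a, b, cover, cnt, hsum⟩ := ih
    obtain ⟨g, ginj, gcall⟩ := hcall n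
    set needA : Fin k → Prop := fun i =>
      ∃ h : a i < l i, some ⟨i, ⟨a i, h⟩⟩ ∈ f (n + 1) ∧ a i + b i < l i ∧
        (a i ≠ 0 ∨ b i = 0 ∨ a i + b i + 1 < l i) with hneedA
    set needB : Fin k → Prop := fun i =>
      ∃ h : l i - 1 - b i < l i, some ⟨i, ⟨l i - 1 - b i, h⟩⟩ ∈ f (n + 1) ∧
        a i + b i < l i ∧ (a i + b i + 1 < l i ∨ (a i = 0 ∧ b i ≠ 0)) with hneedB
    set a' : Fin k → ℕ := fun i => if needA i then a i + 1 else a i with ha'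
    set b' : Fin k → ℕ := fun i => if needB i then b i + 1 else b i with hb'
    have haa : ∀ i, a i ≤ a' i ∧ a' i ≤ a i + 1 := by
      intro i; rw [ha']; simp only; split <;> omega
    have hbb : ∀ i, b i ≤ b' i ∧ b' i ≤ b i + 1 := by
      intro i; rw [hb']; simp only; split <;> omega
    have haA : ∀ i, needA i → a' i = a i + 1 := by
      intro i h; rw [ha']; simp only [if_pos h]
    have hbB : ∀ i, needB i → b' i = b i + 1 := by
      intro i h; rw [hb']; simp only [if_pos h]
    -- caller analysis
    have hcaller : ∀ i : Fin k, ∀ j : Fin (l i), some ⟨i, j⟩ ∈ f (n + 1) →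
        some ⟨i, j⟩ ∉ f n →
        (g (some ⟨i, j⟩) = none ∧ ((j : ℕ) = 0 ∨ (j : ℕ) + 1 = l i)) ∨
        (∃ j' : Fin (l i), g (some ⟨i, j⟩) = some ⟨i, j'⟩ ∧
          ((j' : ℕ) < a i ∨ l i ≤ (j' : ℕ) + b i) ∧
          ((j' : ℕ) + 1 = (j : ℕ) ∨ (j : ℕ) + 1 = (j' : ℕ))) := by
      intro i j h1 h2
      obtain ⟨hg1, hg2⟩ := gcall _ ⟨h1, h2⟩
      rcases (adj_iff _ i j).mp hg2 with ⟨hx, hc⟩ | ⟨j', hx, hc⟩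
      · exact Or.inl ⟨hx, hc⟩
      · exact Or.inr ⟨j', hx, cover i j' (by rw [← hx]; exact hg1), hc⟩
    -- coverage at n+1
    have cover' : ∀ i : Fin k, ∀ j : Fin (l i), some ⟨i, j⟩ ∈ f (n + 1) →
        ((j : ℕ) < a' i ∨ l i ≤ (j : ℕ) + b' i) := by
      intro i j hj
      have hfin := j.isLt
      have hl2 := hl i
      suffices hD : (j : ℕ) < a i ∨ l i ≤ (j : ℕ) + b i ∨
          (needA i ∧ (j : ℕ) ≤ a i) ∨ (needB i ∧ l i ≤ (j : ℕ) + b i + 1) by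
        rcases hD with h | h | ⟨hA, h⟩ | ⟨hB, h⟩
        · exact Or.inl (by have := (haa i).1; omega)
        · exact Or.inr (by have := (hbb i).1; omega)
        · exact Or.inl (by rw [haA i hA]; omega)
        · exact Or.inr (by rw [hbB i hB]; omega)
      by_cases hmem : some ⟨i, j⟩ ∈ f n
      · rcases cover i j hmem with h | h
        · exact Or.inl h
        · exact Or.inr (Or.inl h)
      rcases hcaller i j hj hmem with ⟨-, hz | hz⟩ | ⟨j', -, hcov, hrel⟩
      · -- center call, j = 0
        by_cases c1 : 0 < a i
        · exact Or.inl (by omega)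
        by_cases c2 : l i ≤ b i
        · exact Or.inr (Or.inl (by omega))
        by_cases c3 : b i = 0 ∨ b i + 1 < l i
        · refine Or.inr (Or.inr (Or.inl ⟨⟨by omega, ?_, by omega, by omega⟩, by omega⟩))
          have he : (⟨a i, by omega⟩ : Fin (l i)) = j := Fin.ext (by simp only; omega)
          rw [he]; exact hj
        · refine Or.inr (Or.inr (Or.inr ⟨⟨by omega, ?_, by omega, by omega⟩, by omega⟩))
          have he : (⟨l i - 1 - b i, by omega⟩ : Fin (l i)) = j :=
            Fin.ext (by simp only; omega)
          rw [he]; exact hj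
      · -- center call, j = l i - 1
        by_cases c1 : (j : ℕ) < a i
        · exact Or.inl c1
        by_cases c2 : 1 ≤ b i
        · exact Or.inr (Or.inl (by omega))
        by_cases c3 : a i + 1 < l i
        · refine Or.inr (Or.inr (Or.inr ⟨⟨by omega, ?_, by omega, by omega⟩, by omega⟩))
          have he : (⟨l i - 1 - b i, by omega⟩ : Fin (l i)) = j :=
            Fin.ext (by simp only; omega)
          rw [he]; exact hj
        · refine Or.inr (Or.inr (Or.inl ⟨⟨by omega, ?_, by omega, by omega⟩, by omega⟩))
          have he : (⟨a i, by omega⟩ : Fin (l i)) = j := Fin.ext (by simp only; omega)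
          rw [he]; exact hj
      · -- cycle caller
        have hfin' := j'.isLt
        rcases hrel with hr | hr
        · rcases hcov with hc | hc
          · -- j' < a i, j = j'+1
            by_cases c1 : (j : ℕ) < a i
            · exact Or.inl c1
            by_cases c2 : l i ≤ a i + b i
            · exact Or.inr (Or.inl (by omega))
            · refine Or.inr (Or.inr (Or.inl ⟨⟨by omega, ?_, by omega, by omega⟩, by omega⟩))
              have he : (⟨a i, by omega⟩ : Fin (l i)) = j := Fin.ext (by simp only; omega)
              rw [he]; exact hj
          · exact Or.inr (Or.inl (by omega))
        · rcases hcov with hc | hc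
          · exact Or.inl (by omega)
          · -- l i ≤ j' + b i, j + 1 = j'
            by_cases c1 : l i ≤ (j : ℕ) + b i
            · exact Or.inr (Or.inl c1)
            by_cases c2 : (j : ℕ) < a i
            · exact Or.inl c2
            by_cases c3 : l i ≤ a i + b i
            · exact Or.inl (by omega)
            by_cases c4 : a i + b i + 1 < l i
            · refine Or.inr (Or.inr (Or.inr ⟨⟨by omega, ?_, by omega, by omega⟩, by omega⟩))
              have he : (⟨l i - 1 - b i, by omega⟩ : Fin (l i)) = j :=
                Fin.ext (by simp only; omega)
              rw [he]; exact hj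
            by_cases c5 : a i = 0
            · refine Or.inr (Or.inr (Or.inr ⟨⟨by omega, ?_, by omega, by omega⟩, by omega⟩))
              have he : (⟨l i - 1 - b i, by omega⟩ : Fin (l i)) = j :=
                Fin.ext (by simp only; omega)
              rw [he]; exact hj
            · refine Or.inr (Or.inr (Or.inl ⟨⟨by omega, ?_, by omega, by omega⟩, by omega⟩))
              have he : (⟨a i, by omega⟩ : Fin (l i)) = j := Fin.ext (by simp only; omega)
              rw [he]; exact hj
    -- activation analysis
    have hactA : ∀ i : Fin k, a i = 0 → needA i →
        some ⟨i, ⟨0, by have := hl i; omega⟩⟩ ∈ f (n + 1) ∧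
        some ⟨i, (⟨0, by have := hl i; omega⟩ : Fin (l i))⟩ ∉ f n ∧
        g (some ⟨i, ⟨0, by have := hl i; omega⟩⟩) = none := by
      intro i h0 hA
      obtain ⟨h1, h2, h3, h4⟩ := hA
      have he : (⟨a i, h1⟩ : Fin (l i)) = ⟨0, by have := hl i; omega⟩ :=
        Fin.ext (by simp only; omega)
      rw [he] at h2
      have hnm : some ⟨i, (⟨0, by have := hl i; omega⟩ : Fin (l i))⟩ ∉ f n := by
        intro hc
        rcases cover i _ hc with h | h
        · simp only at h; omega
        · simp only at h; omega
      refine ⟨h2, hnm, ?_⟩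
      rcases hcaller i _ h2 hnm with ⟨hg, -⟩ | ⟨j', hg, hcov, hrel⟩
      · exact hg
      · exfalso
        simp only at hrel
        have hfin' := j'.isLt
        have hl2 := hl i
        rcases hrel with hr | hr
        · omega
        · rcases hcov with hc | hc <;> omega
    have hactB : ∀ i : Fin k, b i = 0 → needB i →
        some ⟨i, ⟨l i - 1, by have := hl i; omega⟩⟩ ∈ f (n + 1) ∧
        some ⟨i, (⟨l i - 1, by have := hl i; omega⟩ : Fin (l i))⟩ ∉ f n ∧
        g (some ⟨i, ⟨l i - 1, by have := hl i; omega⟩⟩) = none := by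
      intro i h0 hB
      obtain ⟨h1, h2, h3, h4⟩ := hB
      have hl2 := hl i
      have he : (⟨l i - 1 - b i, h1⟩ : Fin (l i)) = ⟨l i - 1, by omega⟩ :=
        Fin.ext (by simp only; omega)
      rw [he] at h2
      have hnm : some ⟨i, (⟨l i - 1, by omega⟩ : Fin (l i))⟩ ∉ f n := by
        intro hc
        rcases cover i _ hc with h | h
        · simp only at h; omega
        · simp only at h; omega
      refine ⟨h2, hnm, ?_⟩
      rcases hcaller i _ h2 hnm with ⟨hg, -⟩ | ⟨j', hg, hcov, hrel⟩
      · exact hg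
      · exfalso
        simp only at hrel
        have hfin' := j'.isLt
        rcases hrel with hr | hr
        · rcases hcov with hc | hc <;> omega
        · omega
    -- at most one activation per step
    set newA : Finset (Fin k) := Finset.univ.filter (fun i => a i = 0 ∧ needA i) with hnewA
    set newB : Finset (Fin k) := Finset.univ.filter (fun i => b i = 0 ∧ needB i) with hnewB
    have hAA : ∀ i1 ∈ newA, ∀ i2 ∈ newA, i1 = i2 := by
      intro i1 h1 i2 h2
      rw [hnewA, Finset.mem_filter] at h1 h2
      obtain ⟨m1, n1, g1⟩ := hactA i1 h1.2.1 h1.2.2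
      obtain ⟨m2, n2, g2⟩ := hactA i2 h2.2.1 h2.2.2
      have heq := ginj ⟨m1, n1⟩ ⟨m2, n2⟩ (g1.trans g2.symm)
      rw [Option.some.injEq, sigma_mk_eq_iff] at heq
      exact Fin.ext heq.1
    have hBB : ∀ i1 ∈ newB, ∀ i2 ∈ newB, i1 = i2 := by
      intro i1 h1 i2 h2
      rw [hnewB, Finset.mem_filter] at h1 h2
      obtain ⟨m1, n1, g1⟩ := hactB i1 h1.2.1 h1.2.2
      obtain ⟨m2, n2, g2⟩ := hactB i2 h2.2.1 h2.2.2
      have heq := ginj ⟨m1, n1⟩ ⟨m2, n2⟩ (g1.trans g2.symm)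
      rw [Option.some.injEq, sigma_mk_eq_iff] at heq
      exact Fin.ext heq.1
    have hcross : ∀ i1 ∈ newA, ∀ i2 ∈ newB, False := by
      intro i1 h1 i2 h2
      rw [hnewA, Finset.mem_filter] at h1
      rw [hnewB, Finset.mem_filter] at h2
      obtain ⟨m1, n1, g1⟩ := hactA i1 h1.2.1 h1.2.2
      obtain ⟨m2, n2, g2⟩ := hactB i2 h2.2.1 h2.2.2
      have heq := ginj ⟨m1, n1⟩ ⟨m2, n2⟩ (g1.trans g2.symm)
      rw [Option.some.injEq, sigma_mk_eq_iff] at heq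
      have := hl i2
      simp only at heq
      omega
    have hcard1 : newA.card + newB.card ≤ 1 := by
      rcases Finset.eq_empty_or_nonempty newB with hB | hB
      · rw [hB, Finset.card_empty]
        have := Finset.card_le_one.mpr hAA
        omega
      · obtain ⟨i2, hi2⟩ := hB
        have hAempty : newA = ∅ := by
          rw [Finset.eq_empty_iff_forall_notMem]
          intro i1 hi1
          exact hcross i1 hi1 i2 hi2
        rw [hAempty, Finset.card_empty]
        have := Finset.card_le_one.mpr hBB
        omega
    have hsubA : (Finset.univ.filter fun i => a' i ≠ 0) ⊆
        (Finset.univ.filter fun i => a i ≠ 0) ∪ newA := by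
      intro i hi
      rw [Finset.mem_filter] at hi
      rw [Finset.mem_union, Finset.mem_filter, hnewA, Finset.mem_filter]
      by_cases h : needA i
      · by_cases h0 : a i = 0
        · exact Or.inr ⟨Finset.mem_univ i, h0, h⟩
        · exact Or.inl ⟨Finset.mem_univ i, h0⟩
      · refine Or.inl ⟨Finset.mem_univ i, ?_⟩
        have := hi.2
        rw [ha'] at this
        simp only [if_neg h] at this
        exact this
    have hsubB : (Finset.univ.filter fun i => b' i ≠ 0) ⊆
        (Finset.univ.filter fun i => b i ≠ 0) ∪ newB := by
      intro i hi
      rw [Finset.mem_filter] at hi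
      rw [Finset.mem_union, Finset.mem_filter, hnewB, Finset.mem_filter]
      by_cases h : needB i
      · by_cases h0 : b i = 0
        · exact Or.inr ⟨Finset.mem_univ i, h0, h⟩
        · exact Or.inl ⟨Finset.mem_univ i, h0⟩
      · refine Or.inl ⟨Finset.mem_univ i, ?_⟩
        have := hi.2
        rw [hb'] at this
        simp only [if_neg h] at this
        exact this
    have hcA := (Finset.card_le_card hsubA).trans (Finset.card_union_le _ _)
    have hcB := (Finset.card_le_card hsubB).trans (Finset.card_union_le _ _)
    have cnt' : (Finset.univ.filter fun i => a' i ≠ 0).card +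
        (Finset.univ.filter fun i => b' i ≠ 0).card ≤ n + 1 := by omega
    have hsa : ∑ i : Fin k, a' i =
        ∑ i : Fin k, a i + (Finset.univ.filter fun i => needA i).card := by
      rw [Finset.card_filter, ← Finset.sum_add_distrib]
      apply Finset.sum_congr rfl
      intro i _
      rw [ha']
      simp only
      split <;> simp
    have hsb : ∑ i : Fin k, b' i =
        ∑ i : Fin k, b i + (Finset.univ.filter fun i => needB i).card := by
      rw [Finset.card_filter, ← Finset.sum_add_distrib]
      apply Finset.sum_congr rfl
      intro i _
      rw [hb']
      simp only
      split <;> simp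
    have hfA : (Finset.univ.filter fun i => needA i).card ≤
        (Finset.univ.filter fun i => a' i ≠ 0).card := by
      apply Finset.card_le_card
      intro i hi
      rw [Finset.mem_filter] at hi ⊢
      exact ⟨hi.1, by rw [haA i hi.2]; omega⟩
    have hfB : (Finset.univ.filter fun i => needB i).card ≤
        (Finset.univ.filter fun i => b' i ≠ 0).card := by
      apply Finset.card_le_card
      intro i hi
      rw [Finset.mem_filter] at hi ⊢
      exact ⟨hi.1, by rw [hbB i hi.2]; omega⟩
    refine ⟨a', b', cover', cnt', ?_⟩
    have key : (Finset.univ.filter fun i => needA i).card +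
        (Finset.univ.filter fun i => needB i).card ≤ n + 1 := by omega
    calc 2 * ∑ i : Fin k, (a' i + b' i)
        = 2 * ∑ i : Fin k, (a i + b i) +
          2 * ((Finset.univ.filter fun i => needA i).card +
            (Finset.univ.filter fun i => needB i).card) := by
          rw [Finset.sum_add_distrib, hsa, hsb, Finset.sum_add_distrib]
          ring
      _ ≤ n * (n + 1) + 2 * (n + 1) :=
          Nat.add_le_add hsum (Nat.mul_le_mul_left 2 key)
      _ = (n + 1) * (n + 1 + 1) := by ring

lemma sum_l (hp1 : 1 ≤ p) (hpk : p < k)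
    (hsmall : ∀ i : Fin k, (i : ℕ) + 1 ≤ p →
      (l i : ℤ) = (k : ℤ) + 2 * p - 2 * ((i : ℕ) + 1) + 2)
    (hbig : ∀ j : Fin k, p < (j : ℕ) + 1 →
      (l j : ℤ) = (p : ℤ) + k - ((j : ℕ) + 1) + 1) :
    2 * ∑ i : Fin k, l i = (p + k) * (p + k + 1) := by
  have key : 2 * ∑ i : Fin k, (l i : ℤ) = ((p : ℤ) + k) * ((p : ℤ) + k + 1) := by
    have h1 : ∑ i : Fin k, (l i : ℤ) =
        ∑ j ∈ Finset.range k,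
          (if j < p then (k : ℤ) + 2 * p - 2 * (j + 1) + 2 else (p : ℤ) + k - (j + 1) + 1) := by
      rw [← Fin.sum_univ_eq_sum_range
        (fun j => if j < p then (k : ℤ) + 2 * p - 2 * (j + 1) + 2 else (p : ℤ) + k - (j + 1) + 1)]
      apply Finset.sum_congr rfl
      intro i _
      by_cases h : (i : ℕ) < p
      · rw [if_pos h, hsmall i (by omega)]
      · rw [if_neg h, hbig i (by omega)]
    rw [h1]
    rw [Finset.range_eq_Ico, ← Finset.sum_Ico_consecutive _ (Nat.zero_le p) (le_of_lt hpk)]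
    have h2 : ∑ j ∈ Finset.Ico 0 p,
        (if j < p then (k : ℤ) + 2 * p - 2 * (j + 1) + 2 else (p : ℤ) + k - (j + 1) + 1)
        = ∑ j ∈ Finset.range p, ((k : ℤ) + 2 * p - 2 * (j : ℤ)) := by
      rw [← Finset.range_eq_Ico]
      apply Finset.sum_congr rfl
      intro j hj
      rw [Finset.mem_range] at hj
      rw [if_pos hj]
      push_cast
      ring
    have h3 : ∑ j ∈ Finset.Ico p k,
        (if j < p then (k : ℤ) + 2 * p - 2 * (j + 1) + 2 else (p : ℤ) + k - (j + 1) + 1)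
        = ∑ j ∈ Finset.Ico p k, ((p : ℤ) + k - (j : ℤ)) := by
      apply Finset.sum_congr rfl
      intro j hj
      rw [Finset.mem_Ico] at hj
      rw [if_neg (by omega)]
      push_cast
      ring
    rw [h2, h3]
    have gauss : ∀ m : ℕ, 2 * ∑ j ∈ Finset.range m, (j : ℤ) = (m : ℤ) * (m - 1) := by
      intro m
      induction m with
      | zero => simp
      | succ m ihm =>
        rw [Finset.sum_range_succ]
        push_cast
        push_cast at ihm
        ring_nf
        ring_nf at ihm
        omega
    have e1 : ∑ j ∈ Finset.range p, ((k : ℤ) + 2 * p - 2 * (j : ℤ))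
        = p * ((k : ℤ) + 2 * p) - 2 * ∑ j ∈ Finset.range p, (j : ℤ) := by
      rw [Finset.sum_sub_distrib, Finset.sum_const, Finset.card_range, ← Finset.mul_sum]
      ring
    have e2 : ∑ j ∈ Finset.Ico p k, ((p : ℤ) + k - (j : ℤ))
        = (k - p : ℤ) * ((p : ℤ) + k) - (∑ j ∈ Finset.range k, (j : ℤ) - ∑ j ∈ Finset.range p, (j : ℤ)) := by
      rw [Finset.sum_sub_distrib, Finset.sum_const, Nat.card_Ico, Finset.sum_Ico_eq_sub _ (le_of_lt hpk)]
      rw [nsmul_eq_mul, Nat.cast_sub (le_of_lt hpk)]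
    rw [e1, e2]
    have g1 := gauss p
    have g2 := gauss k
    push_cast at *
    linarith
  have hc : ((2 * ∑ i : Fin k, l i : ℕ) : ℤ) = (((p + k) * (p + k + 1) : ℕ) : ℤ) := by
    push_cast
    linarith [key]
  exact_mod_cast hc

end S15

/-- Let `k ≥ 3` and suppose the `k`-cycle graph has cycle sizes
`l_1 ≥ … ≥ l_k ≥ 2` and there is `p` with `1 ≤ p < k` such that
`l_i = k + 2p - 2i + 2` for `1 ≤ i ≤ p` and `l_j = p + k - j + 1` for `p < j ≤ k`
(1-based indices). Then the schedule informing `C_i` at times `i` and `k+i` for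
`i ≤ p` and `C_j` only at time `j` for `j > p` completes broadcasting in exactly
`p+k` time units, and `p+k` equals the optimal broadcast time from the central
vertex. -/
theorem stmt15 (k : ℕ) (hk : 3 ≤ k) (l : Fin k → ℕ)
    (hmono : ∀ i j : Fin k, i ≤ j → l j ≤ l i) (hl : ∀ i, 2 ≤ l i)
    (p : ℕ) (hp1 : 1 ≤ p) (hpk : p < k)
    (hsmall : ∀ i : Fin k, (i : ℕ) + 1 ≤ p →
      (l i : ℤ) = (k : ℤ) + 2 * p - 2 * ((i : ℕ) + 1) + 2)
    (hbig : ∀ j : Fin k, p < (j : ℕ) + 1 →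
      (l j : ℤ) = (p : ℤ) + k - ((j : ℕ) + 1) + 1) :
    IsBroadcastIn (kCycleGraph k l) none (p + k) ∧
      broadcastTime (kCycleGraph k l) none = p + k := by
  have hupper := S15.upper hl hpk hsmall hbig
  refine ⟨hupper, ?_⟩
  apply le_antisymm
  · exact Nat.sInf_le hupper
  · have hmem : (p + k) ∈ {t | IsBroadcastIn (kCycleGraph k l) none t} := hupper
    apply le_csInf ⟨p + k, hmem⟩
    intro t ht
    obtain ⟨f, hf0, hfmono, hcall, hft⟩ := ht
    obtain ⟨a, b, cover, -, hsum⟩ := S15.invariant hl hf0 hcall t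
    have hfull : ∀ i, l i ≤ a i + b i := by
      intro i
      by_contra h
      push_neg at h
      have hlt : a i < l i := by omega
      have hmem : some ⟨i, (⟨a i, hlt⟩ : Fin (l i))⟩ ∈ f t := by
        rw [hft]; trivial
      have := cover i ⟨a i, hlt⟩ hmem
      simp only at this
      omega
    have hS := S15.sum_l hp1 hpk hsmall hbig
    have h2 : ∑ i : Fin k, l i ≤ ∑ i : Fin k, (a i + b i) :=
      Finset.sum_le_sum (fun i _ => hfull i)
    have h3 : (p + k) * (p + k + 1) ≤ t * (t + 1) := by
      calc (p + k) * (p + k + 1) = 2 * ∑ i : Fin k, l i := hS.symm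
        _ ≤ 2 * ∑ i : Fin k, (a i + b i) := Nat.mul_le_mul_left 2 h2
        _ ≤ t * (t + 1) := hsum
    by_contra hcon
    push_neg at hcon
    have h5 : t * (t + 1) ≤ (p + k) * (p + k) :=
      Nat.mul_le_mul (by omega) (by omega)
    have h6 : (p + k) * (p + k) < (p + k) * (p + k + 1) := by
      have e : (p + k) * (p + k + 1) = (p + k) * (p + k) + (p + k) := by ring
      have hpos : 0 < p + k := by omega
      linarith
    exact Nat.lt_irrefl _ (lt_of_le_of_lt h3 (lt_of_le_of_lt h5 h6))
end

section
/- In a k-cycle graph with central vertex v_c where cycle C_i has l_i ≥ 2 non-central vertices (l_1 ≥ ... ≥ l_k), the schedule informing C_i at times i and k+i (for all i) completes broadcasting in max over 1 ≤ i ≤ k of ⌈(2i - 2 + k + l_i)/2⌉ time units, provided this maximum is at least 2k. -/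
def iT (k : ℕ) (l : Fin k → ℕ) : Option (Σ i : Fin k, Fin (l i)) → ℕ
  | none => 0
  | some ⟨j, p⟩ => min ((j:ℕ)+1+(p:ℕ)) (k+(j:ℕ)+1+(l j - 1 - (p:ℕ)))

def caller (k : ℕ) (l : Fin k → ℕ) :
    Option (Σ i : Fin k, Fin (l i)) → Option (Σ i : Fin k, Fin (l i))
  | none => none
  | some ⟨j, p⟩ =>
    if (j:ℕ)+1+(p:ℕ) ≤ k+(j:ℕ)+1+(l j - 1 - (p:ℕ)) then
      if (p:ℕ) = 0 then none
      else some ⟨j, ⟨(p:ℕ)-1, Nat.lt_of_le_of_lt (Nat.sub_le _ _) p.isLt⟩⟩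
    else
      if h : (p:ℕ)+1 = l j then none
      else some ⟨j, ⟨(p:ℕ)+1, by have := p.isLt; omega⟩⟩


lemma some_inj {k : ℕ} {l : Fin k → ℕ} {j1 j2 : Fin k} {p1 : Fin (l j1)} {p2 : Fin (l j2)}
    (h : (some ⟨j1, p1⟩ : Option (Σ i : Fin k, Fin (l i))) = some ⟨j2, p2⟩) :
    (j1:ℕ) = (j2:ℕ) ∧ (p1:ℕ) = (p2:ℕ) := by
  rw [Option.some.injEq, Sigma.mk.inj_iff] at h
  obtain ⟨hj, hp⟩ := h
  subst hj
  exact ⟨rfl, congrArg Fin.val (eq_of_heq hp)⟩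

lemma some_ext {k : ℕ} {l : Fin k → ℕ} {j1 j2 : Fin k} {p1 : Fin (l j1)} {p2 : Fin (l j2)}
    (hj : (j1:ℕ) = (j2:ℕ)) (hp : (p1:ℕ) = (p2:ℕ)) :
    (some ⟨j1, p1⟩ : Option (Σ i : Fin k, Fin (l i))) = some ⟨j2, p2⟩ := by
  have h : j1 = j2 := Fin.ext hj
  subst h
  rw [Fin.ext hp]

lemma adj_center {k : ℕ} {l : Fin k → ℕ} (j : Fin k) (p : Fin (l j))
    (h : (p:ℕ) = 0 ∨ (p:ℕ) + 1 = l j) :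
    (kCycleGraph k l).Adj none (some ⟨j, p⟩) := by
  rw [kCycleGraph, SimpleGraph.fromRel_adj]
  exact ⟨by simp, Or.inl h⟩

lemma adj_consec {k : ℕ} {l : Fin k → ℕ} (j : Fin k) (p q : Fin (l j))
    (h : (p:ℕ) + 1 = (q:ℕ)) :
    (kCycleGraph k l).Adj (some ⟨j, p⟩) (some ⟨j, q⟩) := by
  rw [kCycleGraph, SimpleGraph.fromRel_adj]
  refine ⟨?_, Or.inl ⟨rfl, h⟩⟩
  intro hh
  obtain ⟨_, hval⟩ := some_inj hh
  omega


/-- In a `k`-cycle graph with central vertex `v_c`, cycle `C_i`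
having `l_i ≥ 2` non-central vertices (`l_1 ≥ … ≥ l_k`), the schedule informing
`C_i` at times `i` and `k+i` (1-based) completes broadcasting in
`max_{1 ≤ i ≤ k} ⌈(2i - 2 + k + l_i)/2⌉` time units, provided this maximum is at
least `2k`. (With 0-based `j`, `⌈(2(j+1) - 2 + k + l_j)/2⌉ = (2j + k + l_j + 1)/2`
in natural-number division.) -/
theorem stmt18 (k : ℕ) (hk : 0 < k) (l : Fin k → ℕ)
    (hmono : ∀ i j : Fin k, i ≤ j → l j ≤ l i) (hl : ∀ i, 2 ≤ l i)
    (hbig : 2 * k ≤ Finset.univ.sup (fun j : Fin k => (2 * (j : ℕ) + k + l j + 1) / 2)) :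
    IsBroadcastIn (kCycleGraph k l) none
      (Finset.univ.sup (fun j : Fin k => (2 * (j : ℕ) + k + l j + 1) / 2)) := by
  classical
  refine ⟨fun n => {v | iT k l v ≤ n}, ?_, ?_, ?_, ?_⟩
  · ext v
    cases v with
    | none => simp [iT]
    | some x =>
      obtain ⟨j, p⟩ := x
      simp only [iT, Set.mem_setOf_eq, Set.mem_singleton_iff]
      constructor
      · intro h; omega
      · intro h; exact absurd h (by simp)
  · intro n v hv
    exact le_trans hv (Nat.le_succ n)
  · intro n
    refine ⟨caller k l, ?_, ?_⟩
    · -- injectivity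
      intro u1 hu1 u2 hu2 he
      obtain ⟨m1, nm1⟩ := hu1
      obtain ⟨m2, nm2⟩ := hu2
      rcases u1 with _ | x1
      · exact absurd (Nat.zero_le n) nm1
      rcases u2 with _ | x2
      · exact absurd (Nat.zero_le n) nm2
      obtain ⟨j1, p1⟩ := x1
      obtain ⟨j2, p2⟩ := x2
      simp only [Set.mem_setOf_eq, iT] at m1 nm1 m2 nm2
      have hp1 := p1.isLt; have hp2 := p2.isLt
      have hl1 := hl j1; have hl2 := hl j2
      have hj1k := j1.isLt; have hj2k := j2.isLt
      simp only [caller] at he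
      split_ifs at he
      all_goals first
        | exact Option.noConfusion he
        | exact Option.noConfusion he.symm
        | (obtain ⟨hj, hq⟩ := some_inj he
           have hj' : j1 = j2 := Fin.ext hj
           subst hj'
           simp only [Fin.val_mk] at hq ⊢
           exact some_ext rfl (by omega))
        | (have hj : (j1:ℕ) = (j2:ℕ) := by omega
           have hj' : j1 = j2 := Fin.ext hj
           subst hj'
           exact some_ext rfl (by omega))
    · -- validity of calls
      rintro u ⟨m1, nm1⟩
      rcases u with _ | x
      · exact absurd (Nat.zero_le n) nm1
      obtain ⟨j, p⟩ := x
      simp only [Set.mem_setOf_eq, iT] at m1 nm1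
      have hp := p.isLt
      have hlj := hl j
      by_cases hab : (j:ℕ)+1+(p:ℕ) ≤ k+(j:ℕ)+1+(l j - 1 - (p:ℕ))
      · by_cases hp0 : (p:ℕ) = 0
        · simp only [caller, if_pos hab, if_pos hp0]
          exact ⟨Nat.zero_le n, adj_center j p (Or.inl hp0)⟩
        · simp only [caller, if_pos hab, if_neg hp0]
          refine ⟨?_, adj_consec j _ p (by simp; omega)⟩
          show iT k l _ ≤ n
          simp only [iT, Fin.val_mk]
          omega
      · by_cases hpl : (p:ℕ)+1 = l j
        · simp only [caller, if_neg hab, dif_pos hpl]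
          exact ⟨Nat.zero_le n, adj_center j p (Or.inr hpl)⟩
        · simp only [caller, if_neg hab, dif_neg hpl]
          refine ⟨?_, (adj_consec j p _ (by simp)).symm⟩
          show iT k l _ ≤ n
          simp only [iT, Fin.val_mk]
          omega
  · ext v
    simp only [Set.mem_setOf_eq, Set.mem_univ, iff_true]
    cases v with
    | none => exact Nat.zero_le _
    | some x =>
      obtain ⟨j, p⟩ := x
      have h1 : (2 * (j : ℕ) + k + l j + 1) / 2 ≤
          Finset.univ.sup (fun j : Fin k => (2 * (j : ℕ) + k + l j + 1) / 2) :=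
        Finset.le_sup (f := fun j : Fin k => (2 * (j : ℕ) + k + l j + 1) / 2) (Finset.mem_univ j)
      have h2 := p.isLt
      have h3 := hl j
      simp only [iT]
      omega
end
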